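/- Subgroup separability is a virtual property: if $G$ has a finite-index subgroup $K$ such that every finitely generated subgroup of $K$ is separable in $K$, then every finitely generated subgroup of $G$ is separable in $G$. -/
import Mathlib

open scoped Pointwise


/-- Subgroup separability is a virtual property: if `K` is a finite-index subgroup of `G`
such that every finitely generated subgroup of `K` is separable in `K`, then every
finitely generated subgroup of `G` is separable in `G`.  Here a subgroup `H ≤ L` is
separable if for every `w ∉ H` there is a finite-index subgroup of `L` containing `H`
but not `w`. -/
theorem subgroup_separability_is_virtual {G : Type*} [Group G]
    (K : Subgroup G) (hK : K.FiniteIndex)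
    (hsepK : ∀ H : Subgroup K, H.FG → ∀ w : K, w ∉ H →
      ∃ K' : Subgroup K, H ≤ K' ∧ K'.FiniteIndex ∧ w ∉ K') :
    ∀ H : Subgroup G, H.FG → ∀ w : G, w ∉ H →
      ∃ L : Subgroup G, H ≤ L ∧ L.FiniteIndex ∧ w ∉ L := by
  haveI := hK
  -- First: separability in `G` of (images of) finitely generated subgroups of `K`.
  have sepG : ∀ D : Subgroup K, D.FG → ∀ w : G, w ∉ D.map K.subtype →
      ∃ L : Subgroup G, D.map K.subtype ≤ L ∧ L.FiniteIndex ∧ w ∉ L := by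
    intro D hD w hw
    by_cases hwK : w ∈ K
    · have hw' : (⟨w, hwK⟩ : K) ∉ D := by
        intro h
        exact hw ⟨⟨w, hwK⟩, h, rfl⟩
      obtain ⟨K', hDK', hK'fi, hwK'⟩ := hsepK D hD ⟨w, hwK⟩ hw'
      refine ⟨K'.map K.subtype, Subgroup.map_mono hDK', ?_, ?_⟩
      · constructor
        rw [Subgroup.index_map_subtype]
        exact mul_ne_zero hK'fi.index_ne_zero hK.index_ne_zero
      · rintro ⟨x, hx, hxw⟩
        apply hwK'
        have : x = ⟨w, hwK⟩ := Subtype.ext hxw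
        rwa [this] at hx
    · exact ⟨K, Subgroup.map_subtype_le D, hK, hwK⟩
  intro H hHfg w hw
  -- `D = H ∩ K` (as a subgroup of `K`) is finitely generated.
  haveI : Group.FG H := (Group.fg_iff_subgroup_fg H).mpr hHfg
  haveI : Group.FG (K.subgroupOf H) := Subgroup.fg_of_index_ne_zero _
  have hKHfg : (K.subgroupOf H).FG := (Group.fg_iff_subgroup_fg _).mp inferInstance
  have hDfg : (H.subgroupOf K).FG := by
    have e1 : (K.subgroupOf H) ≃* (K ⊓ H : Subgroup G) := by
      rw [← Subgroup.inf_subgroupOf_right K H]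
      exact Subgroup.subgroupOfEquivOfLe inf_le_right
    have e2 : (H.subgroupOf K) ≃* (H ⊓ K : Subgroup G) := by
      rw [← Subgroup.inf_subgroupOf_right H K]
      exact Subgroup.subgroupOfEquivOfLe inf_le_right
    have e3 : (K.subgroupOf H) ≃* (H.subgroupOf K) :=
      e1.trans ((MulEquiv.subgroupCongr (inf_comm K H)).trans e2.symm)
    haveI : Group.FG (H.subgroupOf K) :=
      Group.fg_of_surjective e3.surjective (f := e3.toMonoidHom)
    exact (Group.fg_iff_subgroup_fg _).mp inferInstance
  -- For each coset of `H ∩ K` in `H`, separate the translate of `w` from `H ∩ K`.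
  have key : ∀ q : H ⧸ (K.subgroupOf H), ∃ L : Subgroup G,
      (H.subgroupOf K).map K.subtype ≤ L ∧ L.FiniteIndex ∧ ((q.out : G)⁻¹ * w) ∉ L := by
    intro q
    apply sepG _ hDfg
    rw [Subgroup.subgroupOf_map_subtype]
    intro hmem
    have : ((q.out : G)⁻¹ * w) ∈ H := (Subgroup.mem_inf.mp hmem).1
    apply hw
    have := H.mul_mem (q.out).2 this
    rwa [← mul_assoc, mul_inv_cancel, one_mul] at this
  choose L hL1 hL2 hL3 using key
  -- Intersect the normal cores.
  set N : Subgroup G := ⨅ q, (L q).normalCore with hN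
  haveI hNnormal : N.Normal := by
    constructor
    intro n hn g
    rw [hN, Subgroup.mem_iInf] at hn ⊢
    intro q
    exact (L q).normalCore_normal.conj_mem n (hn q) g
  haveI hNfi : N.FiniteIndex := by
    apply Subgroup.finiteIndex_iInf
    intro q
    haveI := hL2 q
    infer_instance
  refine ⟨H ⊔ N, le_sup_left, Subgroup.finiteIndex_of_le le_sup_right, ?_⟩
  intro hwmem
  -- write `w = h * n` with `h ∈ H`, `n ∈ N`
  have : w ∈ (H : Set G) * (N : Set G) := by
    rw [← Subgroup.mul_normal H N]
    exact_mod_cast hwmem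
  obtain ⟨h, hh, n, hn, rfl⟩ := this
  -- compare `h` with the representative of its coset
  set q : H ⧸ (K.subgroupOf H) := QuotientGroup.mk (⟨h, hh⟩ : H) with hq
  have hd : (q.out)⁻¹ * (⟨h, hh⟩ : H) ∈ K.subgroupOf H := by
    rw [← QuotientGroup.eq]
    exact q.out_eq'
  apply hL3 q
  have hdK : ((q.out : G)⁻¹ * h) ∈ K := hd
  have hdH : ((q.out : G)⁻¹ * h) ∈ H := H.mul_mem (H.inv_mem (q.out).2) hh
  have hdL : ((q.out : G)⁻¹ * h) ∈ L q := by
    apply hL1 q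
    rw [Subgroup.subgroupOf_map_subtype]
    exact ⟨hdH, hdK⟩
  have hnL : n ∈ L q := (L q).normalCore_le (Subgroup.mem_iInf.mp hn q)
  have : (q.out : G)⁻¹ * (h * n) = ((q.out : G)⁻¹ * h) * n := by group
  rw [this]
  exact (L q).mul_mem hdL hnL
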